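/- arXiv:math/0410571 — 2 statements merged into one kernel-verified Lean document; each statement's English description precedes it below -/
import Mathlib

section
/- Let ψ be a continuous frame for H with frame operator S, and define the kernels A†(x,z) := ⟨S⁻²ψ_z, ψ_x⟩ and R(x,y) := ⟨ψ_y, S⁻¹ψ_x⟩. Then for all x, y ∈ X: ⟨S⁻¹ψ_y, S⁻¹ψ_x⟩ = ∫_X A†(x,z) R(z,y) dμ(z). Consequently, if m is an admissible weight with ‖A†‖_{A_m} < ∞ and ‖R‖_{A_m} < ∞, then the Gramian kernel of the canonical dual frame, G(S⁻¹F,S⁻¹F)(x,y) := ⟨S⁻¹ψ_y, S⁻¹ψ_x⟩, satisfies ‖G(S⁻¹F,S⁻¹F)‖_{A_m} ≤ ‖A†‖_{A_m} · ‖R‖_{A_m}; that is, the canonical dual frame is intrinsically A_m-localized. -/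
/-!
Since `S` is symmetric, so is its right inverse `S⁻¹`, and the defining identity of `S` at
`f = S⁻¹ψ_y`, `g = S⁻²ψ_x` is exactly `G = A† ∘ R`; the integral converges absolutely because both
factors are in `L²(μ)`. The norm bound is then Schur's test: submultiplicativity of `m` gives
`|G| m ≤ (|A†| m) ∘ (|R| m)` pointwise, and Tonelli bounds the row and column integrals of the
right-hand side by products of those of `A†` and `R`. Tonelli needs joint measurability: the
kernels are measurable because weakly measurable maps into a separable Hilbert space are, and the
continuous weight is measurable by Stone–Weierstrass.
-/
open MeasureTheory ENNReal
open scoped ENNReal NNReal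

noncomputable section

local notation "⟪" x ", " y "⟫" => @inner ℂ _ _ x y

/-- The norm of the Banach algebra `A_m` of kernels on `X × X`. -/
def amNorm {X : Type*} [MeasurableSpace X] (μ : Measure X) (m K : X → X → ℝ) : ℝ≥0∞ :=
  max (essSup (fun x => ∫⁻ y, ENNReal.ofReal (|K x y| * m x y) ∂μ) μ)
      (essSup (fun y => ∫⁻ x, ENNReal.ofReal (|K x y| * m x y) ∂μ) μ)

open Filter

theorem Orthonormal.countable {𝕜 E ι : Type*} [RCLike 𝕜] [NormedAddCommGroup E]
    [InnerProductSpace 𝕜 E] [TopologicalSpace.SeparableSpace E] {b : ι → E}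
    (hb : Orthonormal 𝕜 b) : Countable ι := by
  refine Pairwise.countable_of_isOpen_disjoint (s := fun i => Metric.ball (b i) (1 / 2))
    (fun i j hij => Metric.ball_disjoint_ball ?_) (fun _ => Metric.isOpen_ball)
    (fun _ => Metric.nonempty_ball.2 (by norm_num))
  have hdist : ‖b i - b j‖ ^ 2 = 2 := by
    rw [@norm_sub_sq 𝕜, hb.1 i, hb.1 j, hb.2 hij]
    norm_num
  rw [dist_eq_norm]
  nlinarith [norm_nonneg (b i - b j)]

theorem measurable_of_measurable_inner {X H : Type*} [MeasurableSpace X]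
    [NormedAddCommGroup H] [InnerProductSpace ℂ H] [CompleteSpace H]
    [TopologicalSpace.SeparableSpace H] [MeasurableSpace H] [BorelSpace H] {u : X → H}
    (hu : ∀ f : H, Measurable fun x => ⟪f, u x⟫) : Measurable u := by
  obtain ⟨w, b, -⟩ := exists_hilbertBasis ℂ H
  have : Countable w := b.orthonormal.countable
  exact measurable_of_tendsto_metrizable' (atTop : Filter (Finset w))
    (fun s => s.measurable_sum fun i _ => (hu (b i)).smul_const (b i))
    (tendsto_pi_nhds.2 fun x => by
      have hsum := b.hasSum_repr (u x)
      simp only [b.repr_apply_apply] at hsum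
      exact hsum)

def ContinuousMap.measurableSubalgebra (Z : Type*) [TopologicalSpace Z] [MeasurableSpace Z] :
    Subalgebra ℝ C(Z, ℝ) where
  carrier := {g | Measurable g}
  mul_mem' hg hh := hg.mul hh
  add_mem' hg hh := hg.add hh
  algebraMap_mem' _ := measurable_const

theorem Continuous.measurable_of_separatesPoints {Z : Type*} [TopologicalSpace Z]
    [SigmaCompactSpace Z] [MeasurableSpace Z]
    (hsep : (ContinuousMap.measurableSubalgebra Z).SeparatesPoints) {f : Z → ℝ}
    (hf : Continuous f) : Measurable f := by
  have approx (n : ℕ) : ∃ g ∈ ContinuousMap.measurableSubalgebra Z,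
      ∀ z ∈ compactCovering Z n, ‖g z - f z‖ < 1 / (n + 1) :=
    ContinuousMap.exists_mem_subalgebra_near_continuous_of_isCompact_of_separatesPoints hsep
      ⟨f, hf⟩ (isCompact_compactCovering Z n) (by positivity)
  choose g hg hclose using approx
  refine measurable_of_tendsto_metrizable hg (tendsto_pi_nhds.2 fun z => ?_)
  obtain ⟨N, hN⟩ := exists_mem_compactCovering z
  rw [tendsto_iff_dist_tendsto_zero]
  refine squeeze_zero' (Eventually.of_forall fun n => dist_nonneg) ?_
    tendsto_one_div_add_atTop_nhds_zero_nat
  filter_upwards [eventually_ge_atTop N] with n hn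
  exact (hclose n z (compactCovering_subset Z hn hN)).le

theorem exists_continuousMap_ne {X : Type*} [TopologicalSpace X] [T2Space X]
    [LocallyCompactSpace X] {a b : X} (hab : a ≠ b) : ∃ φ : C(X, ℝ), φ a ≠ φ b := by
  obtain ⟨φ, hφa, hφb, -⟩ := exists_continuous_zero_one_of_isCompact isCompact_singleton
    isClosed_singleton (Set.disjoint_singleton.2 hab)
  exact ⟨φ, by simp [hφa rfl, hφb rfl]⟩

theorem ContinuousMap.measurableSubalgebra_prod_separatesPoints {X Y : Type*}
    [TopologicalSpace X] [T2Space X] [LocallyCompactSpace X] [MeasurableSpace X]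
    [OpensMeasurableSpace X] [TopologicalSpace Y] [T2Space Y] [LocallyCompactSpace Y]
    [MeasurableSpace Y] [OpensMeasurableSpace Y] :
    (ContinuousMap.measurableSubalgebra (X × Y)).SeparatesPoints := by
  rintro p q hpq
  rcases not_and_or.1 (mt Prod.ext_iff.2 hpq) with hfst | hsnd
  · obtain ⟨φ, hφ⟩ := exists_continuousMap_ne hfst
    exact ⟨_, ⟨φ.comp ContinuousMap.fst, φ.measurable.comp measurable_fst, rfl⟩, hφ⟩
  · obtain ⟨φ, hφ⟩ := exists_continuousMap_ne hsnd
    exact ⟨_, ⟨φ.comp ContinuousMap.snd, φ.measurable.comp measurable_snd, rfl⟩, hφ⟩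

/-- Measurability is for the product σ-algebra, which can be strictly smaller than the Borel
σ-algebra of `X × Y` when `X` and `Y` are not second countable. -/
theorem Continuous.measurable_of_sigmaCompact_prod {X Y : Type*}
    [TopologicalSpace X] [T2Space X] [LocallyCompactSpace X] [SigmaCompactSpace X]
    [MeasurableSpace X] [OpensMeasurableSpace X] [TopologicalSpace Y] [T2Space Y]
    [LocallyCompactSpace Y] [SigmaCompactSpace Y] [MeasurableSpace Y] [OpensMeasurableSpace Y]
    {f : X × Y → ℝ} (hf : Continuous f) : Measurable f :=
  hf.measurable_of_separatesPoints ContinuousMap.measurableSubalgebra_prod_separatesPoints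

section SchurTest

variable {X : Type*} [MeasurableSpace X] {μ : Measure X} {m : X → X → ℝ}

theorem ae_lintegral_row_le_amNorm (K : X → X → ℝ) :
    ∀ᵐ x ∂μ, ∫⁻ y, ENNReal.ofReal (|K x y| * m x y) ∂μ ≤ amNorm μ m K :=
  (ENNReal.ae_le_essSup _).mono fun _ hx => hx.trans (le_max_left _ _)

theorem amNorm_transpose (K : X → X → ℝ) :
    amNorm μ (fun x y => m y x) (fun x y => K y x) = amNorm μ m K :=
  max_comm _ _

theorem ofReal_abs_mul_le_lintegral_of_submultiplicative (hm0 : ∀ x y, 0 ≤ m x y)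
    (hms : ∀ x y z, m x y ≤ m x z * m z y) {A R G : X → X → ℝ}
    (hG : ∀ x y, ENNReal.ofReal |G x y| ≤ ∫⁻ z, ENNReal.ofReal (|A x z| * |R z y|) ∂μ)
    (x y : X) :
    ENNReal.ofReal (|G x y| * m x y) ≤
      ∫⁻ z, ENNReal.ofReal (|A x z| * m x z) * ENNReal.ofReal (|R z y| * m z y) ∂μ :=
  calc ENNReal.ofReal (|G x y| * m x y)
      = ENNReal.ofReal |G x y| * ENNReal.ofReal (m x y) := ENNReal.ofReal_mul (abs_nonneg _)
    _ ≤ (∫⁻ z, ENNReal.ofReal (|A x z| * |R z y|) ∂μ) * ENNReal.ofReal (m x y) := by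
        gcongr; exact hG x y
    _ = ∫⁻ z, ENNReal.ofReal (|A x z| * |R z y|) * ENNReal.ofReal (m x y) ∂μ :=
        (lintegral_mul_const' _ _ ENNReal.ofReal_ne_top).symm
    _ ≤ _ := lintegral_mono fun z => by
        rw [← ENNReal.ofReal_mul (by positivity),
          ← ENNReal.ofReal_mul (mul_nonneg (abs_nonneg _) (hm0 x z))]
        refine ENNReal.ofReal_le_ofReal ?_
        calc |A x z| * |R z y| * m x y ≤ |A x z| * |R z y| * (m x z * m z y) := by
              gcongr; exact hms x y z
          _ = |A x z| * m x z * (|R z y| * m z y) := by ring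

variable [SFinite μ]

theorem essSup_lintegral_row_le_amNorm_mul (hm0 : ∀ x y, 0 ≤ m x y)
    (hms : ∀ x y z, m x y ≤ m x z * m z y) (hmm : Measurable fun p : X × X => m p.1 p.2)
    {A R G : X → X → ℝ} (hA : Measurable fun p : X × X => A p.1 p.2)
    (hR : Measurable fun p : X × X => R p.1 p.2)
    (hG : ∀ x y, ENNReal.ofReal |G x y| ≤ ∫⁻ z, ENNReal.ofReal (|A x z| * |R z y|) ∂μ) :
    essSup (fun x => ∫⁻ y, ENNReal.ofReal (|G x y| * m x y) ∂μ) μ ≤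
      amNorm μ m A * amNorm μ m R := by
  have hRrow := ae_lintegral_row_le_amNorm (μ := μ) (m := m) R
  refine essSup_le_of_ae_le _ ?_
  filter_upwards [ae_lintegral_row_le_amNorm A] with x hArow
  calc ∫⁻ y, ENNReal.ofReal (|G x y| * m x y) ∂μ
      ≤ ∫⁻ y, ∫⁻ z,
          ENNReal.ofReal (|A x z| * m x z) * ENNReal.ofReal (|R z y| * m z y) ∂μ ∂μ :=
        lintegral_mono fun y => ofReal_abs_mul_le_lintegral_of_submultiplicative hm0 hms hG x y
    _ = ∫⁻ z, ∫⁻ y,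
          ENNReal.ofReal (|A x z| * m x z) * ENNReal.ofReal (|R z y| * m z y) ∂μ ∂μ :=
        lintegral_lintegral_swap (by fun_prop)
    _ = ∫⁻ z, ENNReal.ofReal (|A x z| * m x z) *
          ∫⁻ y, ENNReal.ofReal (|R z y| * m z y) ∂μ ∂μ :=
        lintegral_congr fun z => lintegral_const_mul' _ _ ENNReal.ofReal_ne_top
    _ ≤ ∫⁻ z, ENNReal.ofReal (|A x z| * m x z) * amNorm μ m R ∂μ :=
        lintegral_mono_ae (hRrow.mono fun z hz => by gcongr)
    _ = (∫⁻ z, ENNReal.ofReal (|A x z| * m x z) ∂μ) * amNorm μ m R :=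
        lintegral_mul_const _ (by fun_prop)
    _ ≤ amNorm μ m A * amNorm μ m R := by gcongr

theorem amNorm_le_mul_of_le_lintegral (hm0 : ∀ x y, 0 ≤ m x y)
    (hms : ∀ x y z, m x y ≤ m x z * m z y) (hmm : Measurable fun p : X × X => m p.1 p.2)
    {A R G : X → X → ℝ} (hA : Measurable fun p : X × X => A p.1 p.2)
    (hR : Measurable fun p : X × X => R p.1 p.2)
    (hG : ∀ x y, ENNReal.ofReal |G x y| ≤ ∫⁻ z, ENNReal.ofReal (|A x z| * |R z y|) ∂μ) :
    amNorm μ m G ≤ amNorm μ m A * amNorm μ m R := by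
  refine max_le (essSup_lintegral_row_le_amNorm_mul hm0 hms hmm hA hR hG) ?_
  have hcol := essSup_lintegral_row_le_amNorm_mul (μ := μ) (m := fun x y => m y x)
    (fun x y => hm0 y x) (fun x y z => (hms y x z).trans_eq (mul_comm _ _))
    (hmm.comp measurable_swap) (hR.comp measurable_swap) (hA.comp measurable_swap)
    (A := fun y z => R z y) (R := fun z x => A x z) (G := fun y x => G x y)
    fun y x => (hG x y).trans_eq (lintegral_congr fun z => by rw [mul_comm])
  rwa [amNorm_transpose (m := m) A, amNorm_transpose (m := m) R, mul_comm] at hcol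

end SchurTest

theorem LinearMap.IsSymmetric.of_rightInverse {𝕜 E : Type*} [RCLike 𝕜] [NormedAddCommGroup E]
    [InnerProductSpace 𝕜 E] {T T' : E →ₗ[𝕜] E} (hT : T.IsSymmetric)
    (h : Function.RightInverse T' T) : T'.IsSymmetric := fun a b =>
  calc inner 𝕜 (T' a) b = inner 𝕜 (T' a) (T (T' b)) := by rw [h]
    _ = inner 𝕜 (T (T' a)) (T' b) := (hT _ _).symm
    _ = inner 𝕜 a (T' b) := by rw [h]

theorem inner_apply_apply_mul_inner_apply {H : Type*} [NormedAddCommGroup H]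
    [InnerProductSpace ℂ H] {T : H →L[ℂ] H} (hT : (T : H →ₗ[ℂ] H).IsSymmetric) (u v w : H) :
    ⟪u, T (T w)⟫ * ⟪T w, v⟫ = ⟪w, T v⟫ * ⟪T (T u), w⟫ := by
  rw [← hT.apply_clm u, ← hT.apply_clm (T u), hT.apply_clm w, mul_comm]

theorem ofReal_norm_integral_mul_le {X : Type*} [MeasurableSpace X] {μ : Measure X}
    (f g : X → ℂ) :
    ENNReal.ofReal ‖∫ z, f z * g z ∂μ‖ ≤ ∫⁻ z, ENNReal.ofReal (‖f z‖ * ‖g z‖) ∂μ := by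
  calc ENNReal.ofReal ‖∫ z, f z * g z ∂μ‖ = ‖∫ z, f z * g z ∂μ‖ₑ := ofReal_norm _
    _ ≤ ∫⁻ z, ‖f z * g z‖ₑ ∂μ := enorm_integral_le_lintegral_enorm _
    _ = ∫⁻ z, ENNReal.ofReal (‖f z‖ * ‖g z‖) ∂μ := by simp_rw [← norm_mul, ofReal_norm]

section Frame

variable {X : Type*} [MeasurableSpace X] {μ : Measure X}
  {H : Type*} [NormedAddCommGroup H] [InnerProductSpace ℂ H] {ψ : X → H}

theorem integrable_inner_mul_inner_of_integrable_sq
    (hmeas : ∀ f : H, AEStronglyMeasurable (fun x => ⟪ψ x, f⟫) μ)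
    (hInt : ∀ f : H, Integrable (fun x => ‖⟪ψ x, f⟫‖ ^ 2) μ) (f g : H) :
    Integrable (fun x => ⟪ψ x, f⟫ * ⟪g, ψ x⟫) μ := by
  have hL2 (h : H) : MemLp (fun x => ⟪ψ x, h⟫) 2 μ :=
    (memLp_two_iff_integrable_sq_norm (hmeas h)).2 (hInt h)
  have hg : MemLp (fun x => ⟪g, ψ x⟫) 2 μ := by
    simpa only [Pi.star_def, RCLike.star_def, inner_conj_symm] using (hL2 g).star
  exact (hL2 f).integrable_mul hg

variable {S : H →L[ℂ] H} (hS : ∀ f g : H, ⟪g, S f⟫ = ∫ x, ⟪ψ x, f⟫ * ⟪g, ψ x⟫ ∂μ)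
include hS

theorem isSymmetric_of_inner_eq_integral : (S : H →ₗ[ℂ] H).IsSymmetric := fun a b => by
  change ⟪S a, b⟫ = ⟪a, S b⟫
  rw [← inner_conj_symm (S a), hS, hS, ← integral_conj]
  refine integral_congr_ae (.of_forall fun x => ?_)
  simp only [map_mul, inner_conj_symm, mul_comm]

variable {Sinv : H →L[ℂ] H} (hright : ∀ f, S (Sinv f) = f)
include hright

theorem inner_rightInverse_eq_integral (u v : H) :
    ⟪Sinv u, Sinv v⟫ = ∫ z, ⟪u, Sinv (Sinv (ψ z))⟫ * ⟪Sinv (ψ z), v⟫ ∂μ := by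
  have hSinv := (isSymmetric_of_inner_eq_integral hS).of_rightInverse hright
  calc ⟪Sinv u, Sinv v⟫ = ⟪Sinv (Sinv u), S (Sinv v)⟫ := by rw [hright, ← hSinv.apply_clm]
    _ = ∫ z, ⟪ψ z, Sinv v⟫ * ⟪Sinv (Sinv u), ψ z⟫ ∂μ := hS _ _
    _ = _ := integral_congr_ae (.of_forall fun z =>
        (inner_apply_apply_mul_inner_apply hSinv u v (ψ z)).symm)

theorem integrable_inner_rightInverse_mul
    (hmeas : ∀ f : H, AEStronglyMeasurable (fun x => ⟪ψ x, f⟫) μ)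
    (hInt : ∀ f : H, Integrable (fun x => ‖⟪ψ x, f⟫‖ ^ 2) μ) (u v : H) :
    Integrable (fun z => ⟪u, Sinv (Sinv (ψ z))⟫ * ⟪Sinv (ψ z), v⟫) μ := by
  have hSinv := (isSymmetric_of_inner_eq_integral hS).of_rightInverse hright
  simp_rw [inner_apply_apply_mul_inner_apply hSinv]
  exact integrable_inner_mul_inner_of_integrable_sq hmeas hInt _ _

end Frame

theorem canonical_dual_intrinsically_localized_general
    {X : Type*} [TopologicalSpace X] [T2Space X] [LocallyCompactSpace X]
    [SigmaCompactSpace X] [MeasurableSpace X] [BorelSpace X]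
    (μ : Measure X) [μ.Regular]
    {H : Type*} [NormedAddCommGroup H] [InnerProductSpace ℂ H] [CompleteSpace H]
    [TopologicalSpace.SeparableSpace H]
    (ψ : X → H)
    (hcont : ∀ f : H, Continuous fun x => ⟪ψ x, f⟫)
    (hInt : ∀ f : H, Integrable (fun x => ‖⟪ψ x, f⟫‖ ^ 2) μ)
    (S : H →L[ℂ] H)
    (hS : ∀ f g : H, ⟪g, S f⟫ = ∫ x, ⟪ψ x, f⟫ * ⟪g, ψ x⟫ ∂μ)
    (Sinv : H →L[ℂ] H)
    (hright : ∀ f, S (Sinv f) = f)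
    -- admissible weight `m`
    (m : X → X → ℝ)
    (hm_cont : Continuous fun p : X × X => m p.1 p.2)
    (hm_one : ∀ x y, 1 ≤ m x y)
    (hm_submult : ∀ x y z, m x y ≤ m x z * m z y) :
    -- the kernel identity `G(S⁻¹F,S⁻¹F)(x,y) = ∫ A†(x,z) R(z,y) dμ(z)`, with an absolutely
    -- convergent integral
    (∀ x y : X,
      Integrable (fun z => ⟪ψ x, Sinv (Sinv (ψ z))⟫ * ⟪Sinv (ψ z), ψ y⟫) μ ∧
      ⟪Sinv (ψ x), Sinv (ψ y)⟫ =
        ∫ z, ⟪ψ x, Sinv (Sinv (ψ z))⟫ * ⟪Sinv (ψ z), ψ y⟫ ∂μ) ∧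
    -- consequently, `A†, R ∈ A_m` implies the canonical dual is intrinsically localized
    (amNorm μ m (fun x z => ‖⟪ψ x, Sinv (Sinv (ψ z))⟫‖) < ⊤ →
      amNorm μ m (fun x y => ‖⟪Sinv (ψ x), ψ y⟫‖) < ⊤ →
      amNorm μ m (fun x y => ‖⟪Sinv (ψ x), Sinv (ψ y)⟫‖) ≤
        amNorm μ m (fun x z => ‖⟪ψ x, Sinv (Sinv (ψ z))⟫‖) *
          amNorm μ m (fun x y => ‖⟪Sinv (ψ x), ψ y⟫‖) ∧
      amNorm μ m (fun x y => ‖⟪Sinv (ψ x), Sinv (ψ y)⟫‖) < ⊤) := by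
  have kernel_identity : ∀ x y : X,
      Integrable (fun z => ⟪ψ x, Sinv (Sinv (ψ z))⟫ * ⟪Sinv (ψ z), ψ y⟫) μ ∧
      ⟪Sinv (ψ x), Sinv (ψ y)⟫ = ∫ z, ⟪ψ x, Sinv (Sinv (ψ z))⟫ * ⟪Sinv (ψ z), ψ y⟫ ∂μ :=
    fun x y => ⟨integrable_inner_rightInverse_mul hS hright
      (fun f => (hcont f).aestronglyMeasurable) hInt _ _,
      inner_rightInverse_eq_integral hS hright _ _⟩
  refine ⟨kernel_identity, fun hA hR => ?_⟩
  let _ : MeasurableSpace H := borel H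
  have _ : BorelSpace H := ⟨rfl⟩
  have hψ : Measurable ψ := measurable_of_measurable_inner fun f => by
    simpa only [RCLike.star_def, inner_conj_symm] using ((hcont f).star).measurable
  refine (fun hle => ⟨hle, hle.trans_lt (ENNReal.mul_lt_top hA hR)⟩) ?_
  refine amNorm_le_mul_of_le_lintegral (fun x y => zero_le_one.trans (hm_one x y)) hm_submult
    hm_cont.measurable_of_sigmaCompact_prod (by fun_prop) (by fun_prop) fun x y => ?_
  simpa only [abs_norm, (kernel_identity x y).2] using ofReal_norm_integral_mul_le _ _

/-- The Gramian of the canonical dual frame factors through the kernels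
`A†(x,z) = ⟨S⁻²ψ_z, ψ_x⟩` and `R(x,y) = ⟨ψ_y, S⁻¹ψ_x⟩`:
`G(S⁻¹F,S⁻¹F) = A† ∘ R`; consequently, if `A†, R ∈ A_m` then the canonical dual frame is
intrinsically `A_m`-localized, with `‖G(S⁻¹F,S⁻¹F)‖_{A_m} ≤ ‖A†‖_{A_m}·‖R‖_{A_m}`.
(The paper's `⟨a,b⟩` is `⟪b,a⟫` in Mathlib's convention.) -/
theorem canonical_dual_intrinsically_localized
    {X : Type*} [TopologicalSpace X] [T2Space X] [LocallyCompactSpace X]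
    [SigmaCompactSpace X] [MeasurableSpace X] [BorelSpace X]
    (μ : Measure X) [μ.Regular] [μ.IsOpenPosMeasure]
    {H : Type*} [NormedAddCommGroup H] [InnerProductSpace ℂ H] [CompleteSpace H]
    [TopologicalSpace.SeparableSpace H]
    (ψ : X → H)
    (hcont : ∀ f : H, Continuous fun x => ⟪ψ x, f⟫)
    (C₁ C₂ : ℝ) (hC₁ : 0 < C₁) (hC₁₂ : C₁ ≤ C₂)
    (hInt : ∀ f : H, Integrable (fun x => ‖⟪ψ x, f⟫‖ ^ 2) μ)
    (hlow : ∀ f : H, C₁ * ‖f‖ ^ 2 ≤ ∫ x, ‖⟪ψ x, f⟫‖ ^ 2 ∂μ)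
    (hup : ∀ f : H, ∫ x, ‖⟪ψ x, f⟫‖ ^ 2 ∂μ ≤ C₂ * ‖f‖ ^ 2)
    (S : H →L[ℂ] H)
    (hS : ∀ f g : H, ⟪g, S f⟫ = ∫ x, ⟪ψ x, f⟫ * ⟪g, ψ x⟫ ∂μ)
    (Sinv : H →L[ℂ] H)
    (hleft : ∀ f, Sinv (S f) = f) (hright : ∀ f, S (Sinv f) = f)
    -- admissible weight `m`
    (m : X → X → ℝ)
    (hm_cont : Continuous fun p : X × X => m p.1 p.2)
    (hm_one : ∀ x y, 1 ≤ m x y)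
    (hm_symm : ∀ x y, m x y = m y x)
    (hm_submult : ∀ x y z, m x y ≤ m x z * m z y)
    (hm_diag : ∃ Cm : ℝ, ∀ x, m x x ≤ Cm) :
    -- the kernel identity `G(S⁻¹F,S⁻¹F)(x,y) = ∫ A†(x,z) R(z,y) dμ(z)`, with an absolutely
    -- convergent integral
    (∀ x y : X,
      Integrable (fun z => ⟪ψ x, Sinv (Sinv (ψ z))⟫ * ⟪Sinv (ψ z), ψ y⟫) μ ∧
      ⟪Sinv (ψ x), Sinv (ψ y)⟫ =
        ∫ z, ⟪ψ x, Sinv (Sinv (ψ z))⟫ * ⟪Sinv (ψ z), ψ y⟫ ∂μ) ∧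
    -- consequently, `A†, R ∈ A_m` implies the canonical dual is intrinsically localized
    (amNorm μ m (fun x z => ‖⟪ψ x, Sinv (Sinv (ψ z))⟫‖) < ⊤ →
      amNorm μ m (fun x y => ‖⟪Sinv (ψ x), ψ y⟫‖) < ⊤ →
      amNorm μ m (fun x y => ‖⟪Sinv (ψ x), Sinv (ψ y)⟫‖) ≤
        amNorm μ m (fun x z => ‖⟪ψ x, Sinv (Sinv (ψ z))⟫‖) *
          amNorm μ m (fun x y => ‖⟪Sinv (ψ x), ψ y⟫‖) ∧
      amNorm μ m (fun x y => ‖⟪Sinv (ψ x), Sinv (ψ y)⟫‖) < ⊤) :=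
  canonical_dual_intrinsically_localized_general μ ψ hcont hInt S hS Sinv hright m hm_cont hm_one
    hm_submult
end
end

section
/- Let w be a continuous weight on X whose associated weight m := m_w is admissible, and let U = (U_i)_{i∈I} and V = (V_i)_{i∈I} be moderate admissible coverings of X over the same index set, both satisfying the m-cover condition, which are m-equivalent, i.e.: (i) there are constants C₁, C₂ > 0 with C₁μ(U_i) ≤ μ(V_i) ≤ C₂μ(U_i) for all i, and (ii) sup_i sup_{x∈U_i, y∈V_i} m(x,y) ≤ C' < ∞. Then for each 1 ≤ p ≤ ∞ there are constants such that for all sequences (λ_i)_{i∈I} of nonnegative reals: ‖Σ_i λ_i χ_{U_i}‖_{L^p_w} is bounded above and below by constant multiples of ‖Σ_i λ_i χ_{V_i}‖_{L^p_w}, and ‖Σ_i λ_i μ(U_i)^{-1} χ_{U_i}‖_{L^p_w} is bounded above and below by constant multiples of ‖Σ_i λ_i μ(V_i)^{-1} χ_{V_i}‖_{L^p_w}. -/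
open MeasureTheory ENNReal
open scoped ENNReal NNReal

noncomputable section

/-- The weight on `X × X` associated to a weight `w` on `X`. -/
def mw {X : Type*} (w : X → ℝ) (x y : X) : ℝ :=
  max (w x / w y) (w y / w x)

/-- A moderate admissible covering `U = (U_i)_{i∈I}` of `X`. -/
structure ModCover (X : Type*) [TopologicalSpace X] [MeasurableSpace X]
    (μ : MeasureTheory.Measure X) (I : Type*) where
  U : I → Set X
  measU : ∀ i, MeasurableSet (U i)
  relCompact : ∀ i, IsCompact (closure (U i))
  interiorNonempty : ∀ i, (interior (U i)).Nonempty
  covers : (⋃ i, U i) = Set.univ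
  N : ℕ
  overlapFin : ∀ j : I, {i : I | (U i ∩ U j).Nonempty}.Finite
  overlapBound : ∀ j : I, {i : I | (U i ∩ U j).Nonempty}.ncard ≤ N
  measLower : ℝ≥0∞
  measLowerPos : 0 < measLower
  lower : ∀ i, measLower ≤ μ (U i)
  finiteMeas : ∀ i, μ (U i) < ⊤
  Ctilde : ℝ≥0∞
  CtildeFin : Ctilde < ⊤
  moderate : ∀ i j, (U i ∩ U j).Nonempty → μ (U i) ≤ Ctilde * μ (U j)

/-!
Fix base points `xᵢ ∈ Uᵢ`. The `m_w`-cover condition makes `(∑ λᵢ χ_{Uᵢ}) w` pointwise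
comparable to `∑ λᵢ w(xᵢ) χ_{Uᵢ}`, and bounded overlap makes the `L^p(μ)`-norm of `∑ cᵢ χ_{Uᵢ}`
comparable to the `L^p`-norm of `(cᵢ)` for the measure `∑ μ(Uᵢ) δᵢ` on the index set. Both sides
are thus weighted `ℓ^p`-norms of coefficient sequences, and `m`-equivalence compares the weights
`μ(Uᵢ) ≍ μ(Vᵢ)` and the values `w(xᵢ) ≍ w(yᵢ)` (for `yᵢ ∈ Vᵢ`).
-/

namespace ENNReal

open Finset

lemma sum_rpow_le_rpow_sum {ι : Type*} (s : Finset ι) (f : ι → ℝ≥0∞) {p : ℝ} (hp : 1 ≤ p) :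
    ∑ i ∈ s, f i ^ p ≤ (∑ i ∈ s, f i) ^ p := by
  classical
  induction s using Finset.induction_on with
  | empty => simp
  | insert i s hi ih =>
    rw [sum_insert hi, sum_insert hi]
    exact (add_le_add_right ih _).trans (add_rpow_le_rpow_add _ _ hp)

lemma rpow_sum_le_card_rpow_mul_sum_rpow {ι : Type*} (s : Finset ι) (f : ι → ℝ≥0∞) {p : ℝ}
    (hp : 1 ≤ p) : (∑ i ∈ s, f i) ^ p ≤ (#s : ℝ≥0∞) ^ p * ∑ i ∈ s, f i ^ p := by
  rcases s.eq_empty_or_nonempty with rfl | hs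
  · simp [zero_rpow_of_pos (zero_lt_one.trans_le hp)]
  calc (∑ i ∈ s, f i) ^ p ≤ (#s : ℝ≥0∞) ^ (p - 1) * ∑ i ∈ s, f i ^ p :=
        rpow_sum_le_const_mul_sum_rpow s f hp
    _ ≤ (#s : ℝ≥0∞) ^ p * ∑ i ∈ s, f i ^ p := by
        gcongr
        · exact_mod_cast hs.card_pos
        · linarith

lemma toReal_inv_le_mul_toReal_inv {u v C : ℝ≥0∞} (hu : u ≠ 0) (hu' : u ≠ ∞) (hv : v ≠ 0)
    (hv' : v ≠ ∞) (hC : C ≠ ∞) (h : v ≤ C * u) : u.toReal⁻¹ ≤ C.toReal * v.toReal⁻¹ := by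
  have hvu : v.toReal ≤ C.toReal * u.toReal := by
    simpa [toReal_mul] using toReal_mono (mul_ne_top hC hu') h
  rw [← div_eq_mul_inv, le_div_iff₀ (toReal_pos hv hv'), inv_mul_le_iff₀ (toReal_pos hu hu')]
  simpa [mul_comm] using hvu

end ENNReal

lemma Finset.norm_sum_mul_le_mul_norm_sum {ι : Type*} {s : Finset ι} {lam u v : ι → ℝ} {C : ℝ}
    (hlam : ∀ i, 0 ≤ lam i) (hu : ∀ i, 0 ≤ u i) (hv : ∀ i, 0 ≤ v i) (h : ∀ i ∈ s, u i ≤ C * v i) :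
    ‖∑ i ∈ s, lam i * u i‖ ≤ C * ‖∑ i ∈ s, lam i * v i‖ := by
  rw [Real.norm_of_nonneg (sum_nonneg fun i _ => mul_nonneg (hlam i) (hu i)),
    Real.norm_of_nonneg (sum_nonneg fun i _ => mul_nonneg (hlam i) (hv i)), mul_sum]
  refine sum_le_sum fun i hi => ?_
  rw [mul_left_comm]
  exact mul_le_mul_of_nonneg_left (h i hi) (hlam i)

lemma MeasureTheory.eLpNorm_le_mul_eLpNorm_of_lintegral_rpow_le {α β ε ε' : Type*}
    [MeasurableSpace α] [MeasurableSpace β] [ENorm ε] [ENorm ε'] {μ : Measure α}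
    {ν : Measure β} {f : α → ε} {g : β → ε'} {p K : ℝ≥0∞} (hp0 : p ≠ 0) (hp : p ≠ ∞)
    (h : ∫⁻ x, ‖f x‖ₑ ^ p.toReal ∂μ ≤ K ^ p.toReal * ∫⁻ y, ‖g y‖ₑ ^ p.toReal ∂ν) :
    eLpNorm f p μ ≤ K * eLpNorm g p ν := by
  have hq : 0 < p.toReal := ENNReal.toReal_pos hp0 hp
  rw [eLpNorm_eq_lintegral_rpow_enorm_toReal hp0 hp, eLpNorm_eq_lintegral_rpow_enorm_toReal hp0 hp]
  calc (∫⁻ x, ‖f x‖ₑ ^ p.toReal ∂μ) ^ (1 / p.toReal)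
      ≤ (K ^ p.toReal * ∫⁻ y, ‖g y‖ₑ ^ p.toReal ∂ν) ^ (1 / p.toReal) := by gcongr
    _ = K * (∫⁻ y, ‖g y‖ₑ ^ p.toReal ∂ν) ^ (1 / p.toReal) := by
      rw [ENNReal.mul_rpow_of_nonneg _ _ (by positivity), ← ENNReal.rpow_mul,
        mul_one_div_cancel hq.ne', ENNReal.rpow_one]

lemma mw_comm {X : Type*} (w : X → ℝ) (x y : X) : mw w x y = mw w y x := max_comm _ _

lemma le_mul_of_mw_le {X : Type*} {w : X → ℝ} (hw : ∀ x, 0 < w x) {x y : X} {C : ℝ}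
    (h : mw w x y ≤ C) : w x ≤ C * w y :=
  (div_le_iff₀ (hw y)).1 ((le_max_left _ _).trans h)

namespace ModCover

open Set

variable {X : Type*} [TopologicalSpace X] [MeasurableSpace X] {μ : Measure X} {I : Type*}
  (𝒞 : ModCover X μ I)

/-- `∑ᵢ cᵢ χ_{Uᵢ}`. -/
def sumIndicator {M : Type*} [AddCommMonoid M] [TopologicalSpace M] (c : I → M) (x : X) : M :=
  ∑' i, (𝒞.U i).indicator (fun _ => c i) x

/-- `(∑ᵢ λᵢ χ_{Uᵢ}) w`. -/
def weightedSum (w : X → ℝ) (lam : I → ℝ) (x : X) : ℝ :=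
  (∑' i, lam i * (𝒞.U i).indicator (fun _ => (1 : ℝ)) x) * w x

lemma exists_mem (x : X) : ∃ i, x ∈ 𝒞.U i := by
  simpa [← mem_iUnion] using 𝒞.covers.symm ▸ mem_univ x

lemma measure_pos (i : I) : 0 < μ (𝒞.U i) := 𝒞.measLowerPos.trans_le (𝒞.lower i)

lemma finite_setOf_mem (x : X) : {i | x ∈ 𝒞.U i}.Finite := by
  obtain ⟨j, hj⟩ := 𝒞.exists_mem x
  exact (𝒞.overlapFin j).subset fun i hi => ⟨x, hi, hj⟩

def indices (x : X) : Finset I := (𝒞.finite_setOf_mem x).toFinset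

@[simp]
lemma mem_indices {x : X} {i : I} : i ∈ 𝒞.indices x ↔ x ∈ 𝒞.U i :=
  (𝒞.finite_setOf_mem x).mem_toFinset

lemma card_indices_le (x : X) : (𝒞.indices x).card ≤ 𝒞.N := by
  obtain ⟨j, hj⟩ := 𝒞.exists_mem x
  have hsub : {i | x ∈ 𝒞.U i} ⊆ {i | (𝒞.U i ∩ 𝒞.U j).Nonempty} := fun i hi => ⟨x, hi, hj⟩
  rw [indices, ← ncard_eq_toFinset_card _ (𝒞.finite_setOf_mem x)]
  exact (ncard_le_ncard hsub (𝒞.overlapFin j)).trans (𝒞.overlapBound j)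

lemma tsum_eq_sum_indices {M : Type*} [AddCommMonoid M] [TopologicalSpace M] {x : X}
    {f : I → M} (hf : ∀ i, x ∉ 𝒞.U i → f i = 0) : ∑' i, f i = ∑ i ∈ 𝒞.indices x, f i :=
  tsum_eq_sum fun i hi => hf i (by simpa using hi)

lemma sumIndicator_eq_sum {M : Type*} [AddCommMonoid M] [TopologicalSpace M] (c : I → M) (x : X) :
    𝒞.sumIndicator c x = ∑ i ∈ 𝒞.indices x, c i := by
  rw [sumIndicator, 𝒞.tsum_eq_sum_indices fun i hi => indicator_of_notMem hi _]
  exact Finset.sum_congr rfl fun i hi => indicator_of_mem ((𝒞.mem_indices).1 hi) _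

lemma weightedSum_eq_sum (w : X → ℝ) (lam : I → ℝ) (x : X) :
    𝒞.weightedSum w lam x = ∑ i ∈ 𝒞.indices x, lam i * w x := by
  rw [weightedSum, 𝒞.tsum_eq_sum_indices fun i hi => by rw [indicator_of_notMem hi, mul_zero],
    Finset.sum_mul]
  exact Finset.sum_congr rfl fun i hi => by rw [indicator_of_mem ((𝒞.mem_indices).1 hi), mul_one]

lemma enorm_sumIndicator_of_nonneg {c : I → ℝ} (hc : ∀ i, 0 ≤ c i) (x : X) :
    ‖𝒞.sumIndicator c x‖ₑ = ∑ i ∈ 𝒞.indices x, ‖c i‖ₑ := by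
  simp_rw [sumIndicator_eq_sum, Real.enorm_eq_ofReal (Finset.sum_nonneg fun i _ => hc i),
    Real.enorm_eq_ofReal (hc _), ENNReal.ofReal_sum_of_nonneg fun i _ => hc i]

section Weight

variable {w : X → ℝ} {Cm : ℝ} {b : I → X} {lam : I → ℝ}

lemma norm_weightedSum_le (hw : ∀ x, 0 < w x)
    (hcover : ∀ i, ∀ x ∈ 𝒞.U i, ∀ y ∈ 𝒞.U i, mw w x y ≤ Cm) (hb : ∀ i, b i ∈ 𝒞.U i)
    (hlam : ∀ i, 0 ≤ lam i) (x : X) :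
    ‖𝒞.weightedSum w lam x‖ ≤ Cm * ‖𝒞.sumIndicator (fun i => lam i * w (b i)) x‖ := by
  rw [weightedSum_eq_sum, sumIndicator_eq_sum]
  exact Finset.norm_sum_mul_le_mul_norm_sum hlam (fun _ => (hw x).le) (fun i => (hw (b i)).le)
    fun i hi => le_mul_of_mw_le hw (hcover i x ((𝒞.mem_indices).1 hi) _ (hb i))

lemma norm_sumIndicator_le (hw : ∀ x, 0 < w x)
    (hcover : ∀ i, ∀ x ∈ 𝒞.U i, ∀ y ∈ 𝒞.U i, mw w x y ≤ Cm) (hb : ∀ i, b i ∈ 𝒞.U i)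
    (hlam : ∀ i, 0 ≤ lam i) (x : X) :
    ‖𝒞.sumIndicator (fun i => lam i * w (b i)) x‖ ≤ Cm * ‖𝒞.weightedSum w lam x‖ := by
  rw [weightedSum_eq_sum, sumIndicator_eq_sum]
  exact Finset.norm_sum_mul_le_mul_norm_sum hlam (fun i => (hw (b i)).le) (fun _ => (hw x).le)
    fun i hi => le_mul_of_mw_le hw (hcover i _ (hb i) x ((𝒞.mem_indices).1 hi))

end Weight

section PatchMeasure

variable [MeasurableSpace I]

def patchMeasure : Measure I := Measure.sum fun i => μ (𝒞.U i) • Measure.dirac i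

lemma patchMeasure_singleton_ne_zero (i : I) : 𝒞.patchMeasure {i} ≠ 0 := by
  refine (lt_of_lt_of_le (𝒞.measure_pos i) ?_).ne'
  calc μ (𝒞.U i) = (μ (𝒞.U i) • Measure.dirac i) {i} := by simp
    _ ≤ 𝒞.patchMeasure {i} := Measure.le_sum (fun j => μ (𝒞.U j) • Measure.dirac j) i _

lemma ae_patchMeasure_iff [Countable I] {P : I → Prop} :
    (∀ᵐ i ∂𝒞.patchMeasure, P i) ↔ ∀ i, P i := by
  simp [ae_iff_of_countable, 𝒞.patchMeasure_singleton_ne_zero]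

lemma lintegral_patchMeasure [Countable I] [MeasurableSingletonClass I] (f : I → ℝ≥0∞) :
    ∫⁻ i, f i ∂𝒞.patchMeasure = ∫⁻ x, 𝒞.sumIndicator f x ∂μ := by
  simp only [patchMeasure, sumIndicator]
  rw [lintegral_sum_measure,
    lintegral_tsum fun i => (aemeasurable_const.indicator (𝒞.measU i))]
  simp [lintegral_indicator_const (𝒞.measU _), mul_comm]

lemma patchMeasure_le_smul {𝒟 : ModCover X μ I} {L : ℝ≥0∞}
    (h : ∀ i, μ (𝒞.U i) ≤ L * μ (𝒟.U i)) : 𝒞.patchMeasure ≤ L • 𝒟.patchMeasure := by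
  refine Measure.le_iff.2 fun s hs => ?_
  simp only [patchMeasure, Measure.smul_apply, Measure.sum_apply _ hs, smul_eq_mul,
    ← ENNReal.tsum_mul_left]
  refine ENNReal.tsum_le_tsum fun i => ?_
  rw [← mul_assoc]
  gcongr
  exact h i

variable [Countable I]

lemma lintegral_enorm_sumIndicator_rpow_le [MeasurableSingletonClass I] (c : I → ℝ) {q : ℝ}
    (hq : 1 ≤ q) :
    ∫⁻ x, ‖𝒞.sumIndicator c x‖ₑ ^ q ∂μ ≤
      (𝒞.N : ℝ≥0∞) ^ q * ∫⁻ i, ‖c i‖ₑ ^ q ∂𝒞.patchMeasure := by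
  rw [lintegral_patchMeasure, ← lintegral_const_mul' _ _ (by finiteness)]
  refine lintegral_mono fun x => ?_
  rw [sumIndicator_eq_sum, sumIndicator_eq_sum]
  calc ‖∑ i ∈ 𝒞.indices x, c i‖ₑ ^ q ≤ (∑ i ∈ 𝒞.indices x, ‖c i‖ₑ) ^ q := by
        gcongr; exact enorm_sum_le _ _
    _ ≤ ((𝒞.indices x).card : ℝ≥0∞) ^ q * ∑ i ∈ 𝒞.indices x, ‖c i‖ₑ ^ q :=
        ENNReal.rpow_sum_le_card_rpow_mul_sum_rpow _ _ hq
    _ ≤ (𝒞.N : ℝ≥0∞) ^ q * ∑ i ∈ 𝒞.indices x, ‖c i‖ₑ ^ q := by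
        gcongr; exact_mod_cast 𝒞.card_indices_le x

lemma lintegral_rpow_le_lintegral_enorm_sumIndicator_rpow [MeasurableSingletonClass I]
    {c : I → ℝ} (hc : ∀ i, 0 ≤ c i) {q : ℝ} (hq : 1 ≤ q) :
    ∫⁻ i, ‖c i‖ₑ ^ q ∂𝒞.patchMeasure ≤ ∫⁻ x, ‖𝒞.sumIndicator c x‖ₑ ^ q ∂μ := by
  rw [lintegral_patchMeasure]
  refine lintegral_mono fun x => ?_
  rw [sumIndicator_eq_sum, 𝒞.enorm_sumIndicator_of_nonneg hc]
  exact ENNReal.sum_rpow_le_rpow_sum _ _ hq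

lemma eLpNormEssSup_sumIndicator_le (c : I → ℝ) :
    eLpNormEssSup (𝒞.sumIndicator c) μ ≤ 𝒞.N * eLpNormEssSup c 𝒞.patchMeasure := by
  have hc : ∀ i, ‖c i‖ₑ ≤ eLpNormEssSup c 𝒞.patchMeasure :=
    𝒞.ae_patchMeasure_iff.1 ae_le_eLpNormEssSup
  refine essSup_le_of_ae_le _ (ae_of_all _ fun x => ?_)
  calc ‖𝒞.sumIndicator c x‖ₑ = ‖∑ i ∈ 𝒞.indices x, c i‖ₑ := by rw [sumIndicator_eq_sum]
    _ ≤ ∑ i ∈ 𝒞.indices x, ‖c i‖ₑ := enorm_sum_le _ _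
    _ ≤ (𝒞.indices x).card • eLpNormEssSup c 𝒞.patchMeasure :=
        Finset.sum_le_card_nsmul _ _ _ fun i _ => hc i
    _ ≤ 𝒞.N * eLpNormEssSup c 𝒞.patchMeasure := by
        rw [nsmul_eq_mul]; gcongr; exact_mod_cast 𝒞.card_indices_le x

lemma eLpNormEssSup_le_eLpNormEssSup_sumIndicator {c : I → ℝ} (hc : ∀ i, 0 ≤ c i) :
    eLpNormEssSup c 𝒞.patchMeasure ≤ eLpNormEssSup (𝒞.sumIndicator c) μ := by
  refine essSup_le_of_ae_le _ (𝒞.ae_patchMeasure_iff.2 fun i => ?_)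
  obtain ⟨x, hx, hle⟩ := Measure.exists_mem_of_measure_ne_zero_of_ae (𝒞.measure_pos i).ne'
    (ae_restrict_of_ae (ae_le_eLpNormEssSup (μ := μ) (f := 𝒞.sumIndicator c)))
  refine le_trans ?_ hle
  rw [𝒞.enorm_sumIndicator_of_nonneg hc]
  exact Finset.single_le_sum (f := fun i => ‖c i‖ₑ) (fun _ _ => zero_le) ((𝒞.mem_indices).2 hx)

variable [MeasurableSingletonClass I] {p : ℝ≥0∞}

lemma eLpNorm_sumIndicator_le (c : I → ℝ) (hp : 1 ≤ p) :
    eLpNorm (𝒞.sumIndicator c) p μ ≤ 𝒞.N * eLpNorm c p 𝒞.patchMeasure := by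
  rcases eq_or_ne p ∞ with rfl | hp_top
  · simpa only [eLpNorm_exponent_top] using 𝒞.eLpNormEssSup_sumIndicator_le c
  refine eLpNorm_le_mul_eLpNorm_of_lintegral_rpow_le (zero_lt_one.trans_le hp).ne' hp_top ?_
  exact 𝒞.lintegral_enorm_sumIndicator_rpow_le c (by simpa using ENNReal.toReal_mono hp_top hp)

lemma eLpNorm_le_eLpNorm_sumIndicator {c : I → ℝ} (hc : ∀ i, 0 ≤ c i) (hp : 1 ≤ p) :
    eLpNorm c p 𝒞.patchMeasure ≤ eLpNorm (𝒞.sumIndicator c) p μ := by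
  rcases eq_or_ne p ∞ with rfl | hp_top
  · simpa only [eLpNorm_exponent_top] using 𝒞.eLpNormEssSup_le_eLpNormEssSup_sumIndicator hc
  have hq : 1 ≤ p.toReal := by simpa using ENNReal.toReal_mono hp_top hp
  simpa using eLpNorm_le_mul_eLpNorm_of_lintegral_rpow_le (K := 1) (zero_lt_one.trans_le hp).ne'
    hp_top (by simpa using 𝒞.lintegral_rpow_le_lintegral_enorm_sumIndicator_rpow hc hq)

variable {w : X → ℝ} {Cm : ℝ} {b : I → X} {lam : I → ℝ}

lemma eLpNorm_weightedSum_le (hw : ∀ x, 0 < w x)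
    (hcover : ∀ i, ∀ x ∈ 𝒞.U i, ∀ y ∈ 𝒞.U i, mw w x y ≤ Cm) (hb : ∀ i, b i ∈ 𝒞.U i)
    (hlam : ∀ i, 0 ≤ lam i) (hp : 1 ≤ p) :
    eLpNorm (𝒞.weightedSum w lam) p μ ≤
      ENNReal.ofReal Cm * 𝒞.N * eLpNorm (fun i => lam i * w (b i)) p 𝒞.patchMeasure :=
  calc _ ≤ ENNReal.ofReal Cm * eLpNorm (𝒞.sumIndicator fun i => lam i * w (b i)) p μ :=
      eLpNorm_le_mul_eLpNorm_of_ae_le_mul (ae_of_all _ (𝒞.norm_weightedSum_le hw hcover hb hlam)) p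
    _ ≤ ENNReal.ofReal Cm * (𝒞.N * eLpNorm (fun i => lam i * w (b i)) p 𝒞.patchMeasure) := by
      grw [𝒞.eLpNorm_sumIndicator_le _ hp]
    _ = _ := (mul_assoc _ _ _).symm

lemma eLpNorm_le_eLpNorm_weightedSum (hw : ∀ x, 0 < w x)
    (hcover : ∀ i, ∀ x ∈ 𝒞.U i, ∀ y ∈ 𝒞.U i, mw w x y ≤ Cm) (hb : ∀ i, b i ∈ 𝒞.U i)
    (hlam : ∀ i, 0 ≤ lam i) (hp : 1 ≤ p) :
    eLpNorm (fun i => lam i * w (b i)) p 𝒞.patchMeasure ≤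
      ENNReal.ofReal Cm * eLpNorm (𝒞.weightedSum w lam) p μ :=
  calc _ ≤ eLpNorm (𝒞.sumIndicator fun i => lam i * w (b i)) p μ :=
      𝒞.eLpNorm_le_eLpNorm_sumIndicator (fun i => mul_nonneg (hlam i) (hw _).le) hp
    _ ≤ _ := eLpNorm_le_mul_eLpNorm_of_ae_le_mul
      (ae_of_all _ (𝒞.norm_sumIndicator_le hw hcover hb hlam)) p

end PatchMeasure

variable [Countable I] {𝒰 𝒱 : ModCover X μ I} {w : X → ℝ} {CmU CmV C' : ℝ} {p : ℝ≥0∞}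

lemma exists_eLpNorm_weightedSum_le (hw : ∀ x, 0 < w x)
    (hcoverU : ∀ i, ∀ x ∈ 𝒰.U i, ∀ y ∈ 𝒰.U i, mw w x y ≤ CmU)
    (hcoverV : ∀ i, ∀ x ∈ 𝒱.U i, ∀ y ∈ 𝒱.U i, mw w x y ≤ CmV)
    (hclose : ∀ i, ∀ x ∈ 𝒰.U i, ∀ y ∈ 𝒱.U i, mw w x y ≤ C') {L : ℝ≥0∞} (hL : L ≠ ∞)
    (hμ : ∀ i, μ (𝒰.U i) ≤ L * μ (𝒱.U i)) (K : ℝ) (hp : 1 ≤ p) :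
    ∃ C : ℝ≥0∞, C ≠ ∞ ∧ ∀ α β : I → ℝ, (∀ i, 0 ≤ α i) → (∀ i, 0 ≤ β i) →
      (∀ i, α i ≤ K * β i) →
      eLpNorm (𝒰.weightedSum w α) p μ ≤ C * eLpNorm (𝒱.weightedSum w β) p μ := by
  let : MeasurableSpace I := ⊤
  choose a ha using fun i => nonempty_of_measure_ne_zero (𝒰.measure_pos i).ne'
  choose b hb using fun i => nonempty_of_measure_ne_zero (𝒱.measure_pos i).ne'
  refine ⟨ENNReal.ofReal CmU * 𝒰.N * (L ^ (1 / p).toReal * ENNReal.ofReal (K * C')) *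
    ENNReal.ofReal CmV, by finiteness, fun α β hα hβ hαβ => ?_⟩
  have hcoeff : ∀ i, ‖α i * w (a i)‖ ≤ K * C' * ‖β i * w (b i)‖ := fun i => by
    rw [Real.norm_of_nonneg (mul_nonneg (hα i) (hw _).le),
      Real.norm_of_nonneg (mul_nonneg (hβ i) (hw _).le)]
    calc α i * w (a i) ≤ K * β i * (C' * w (b i)) :=
          mul_le_mul (hαβ i) (le_mul_of_mw_le hw (hclose i _ (ha i) _ (hb i))) (hw _).le
            ((hα i).trans (hαβ i))
      _ = K * C' * (β i * w (b i)) := by ring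
  have hdiscrete : eLpNorm (fun i => α i * w (a i)) p 𝒰.patchMeasure ≤
      L ^ (1 / p).toReal * ENNReal.ofReal (K * C') *
        eLpNorm (fun i => β i * w (b i)) p 𝒱.patchMeasure :=
    calc _ ≤ eLpNorm (fun i => α i * w (a i)) p (L • 𝒱.patchMeasure) :=
          eLpNorm_mono_measure _ (𝒰.patchMeasure_le_smul hμ)
      _ ≤ L ^ (1 / p).toReal * eLpNorm (fun i => α i * w (a i)) p 𝒱.patchMeasure :=
          eLpNorm_smul_measure_le _ _ _ _
      _ ≤ _ := by
          grw [mul_assoc, eLpNorm_le_mul_eLpNorm_of_ae_le_mul (ae_of_all _ hcoeff) p]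
  calc _ ≤ ENNReal.ofReal CmU * 𝒰.N * eLpNorm (fun i => α i * w (a i)) p 𝒰.patchMeasure :=
        𝒰.eLpNorm_weightedSum_le hw hcoverU ha hα hp
    _ ≤ ENNReal.ofReal CmU * 𝒰.N * (L ^ (1 / p).toReal * ENNReal.ofReal (K * C') *
          (ENNReal.ofReal CmV * eLpNorm (𝒱.weightedSum w β) p μ)) := by
        grw [hdiscrete, 𝒱.eLpNorm_le_eLpNorm_weightedSum hw hcoverV hb hβ hp]
    _ = _ := by ring

lemma exists_eLpNorm_weightedSum_le_of_measure_equiv (hw : ∀ x, 0 < w x)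
    (hcoverU : ∀ i, ∀ x ∈ 𝒰.U i, ∀ y ∈ 𝒰.U i, mw w x y ≤ CmU)
    (hcoverV : ∀ i, ∀ x ∈ 𝒱.U i, ∀ y ∈ 𝒱.U i, mw w x y ≤ CmV)
    (hclose : ∀ i, ∀ x ∈ 𝒰.U i, ∀ y ∈ 𝒱.U i, mw w x y ≤ C') {L M : ℝ≥0∞}
    (hL : L ≠ ∞) (hUV : ∀ i, μ (𝒰.U i) ≤ L * μ (𝒱.U i))
    (hM : M ≠ ∞) (hVU : ∀ i, μ (𝒱.U i) ≤ M * μ (𝒰.U i)) (hp : 1 ≤ p) :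
    ∃ C : ℝ≥0∞, C ≠ ∞ ∧ ∀ lam : I → ℝ, (∀ i, 0 ≤ lam i) →
      eLpNorm (𝒰.weightedSum w lam) p μ ≤ C * eLpNorm (𝒱.weightedSum w lam) p μ ∧
      eLpNorm (𝒰.weightedSum w fun i => lam i * (μ (𝒰.U i)).toReal⁻¹) p μ ≤
        C * eLpNorm (𝒱.weightedSum w fun i => lam i * (μ (𝒱.U i)).toReal⁻¹) p μ := by
  obtain ⟨C₁, hC₁, h₁⟩ := exists_eLpNorm_weightedSum_le hw hcoverU hcoverV hclose hL hUV 1 hp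
  obtain ⟨C₂, hC₂, h₂⟩ :=
    exists_eLpNorm_weightedSum_le hw hcoverU hcoverV hclose hL hUV M.toReal hp
  have hnormalized : ∀ (𝒞 : ModCover X μ I) (lam : I → ℝ), (∀ i, 0 ≤ lam i) →
      ∀ i, 0 ≤ lam i * (μ (𝒞.U i)).toReal⁻¹ := fun _ _ hlam i =>
    mul_nonneg (hlam i) (inv_nonneg.2 ENNReal.toReal_nonneg)
  refine ⟨max C₁ C₂, max_ne_top hC₁ hC₂, fun lam hlam => ⟨?_, ?_⟩⟩
  · grw [h₁ lam lam hlam hlam fun i => (one_mul _).ge, ← le_max_left]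
  · refine (h₂ _ _ (hnormalized 𝒰 lam hlam) (hnormalized 𝒱 lam hlam) fun i => ?_).trans ?_
    · rw [mul_left_comm]
      exact mul_le_mul_of_nonneg_left (ENNReal.toReal_inv_le_mul_toReal_inv
        (𝒰.measure_pos i).ne' (𝒰.finiteMeas i).ne (𝒱.measure_pos i).ne' (𝒱.finiteMeas i).ne hM
        (hVU i)) (hlam i)
    · grw [← le_max_right]

end ModCover

theorem m_equivalent_coverings_same_sequence_spaces_general
    {X : Type*} [TopologicalSpace X] [MeasurableSpace X]
    (μ : MeasureTheory.Measure X)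
    {I : Type*} [Countable I]
    (𝒰 𝒱 : ModCover X μ I)
    (w : X → ℝ) (hwpos : ∀ x, 0 < w x)
    -- both coverings satisfy the `m_w`-cover condition
    (CmU : ℝ) (hcoverU : ∀ i, ∀ x ∈ 𝒰.U i, ∀ y ∈ 𝒰.U i, mw w x y ≤ CmU)
    (CmV : ℝ) (hcoverV : ∀ i, ∀ x ∈ 𝒱.U i, ∀ y ∈ 𝒱.U i, mw w x y ≤ CmV)
    -- (i) comparable measures
    (Cl Cu : ℝ≥0∞) (hClpos : 0 < Cl) (hCufin : Cu < ⊤)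
    (hcomp : ∀ i, Cl * μ (𝒰.U i) ≤ μ (𝒱.U i) ∧ μ (𝒱.U i) ≤ Cu * μ (𝒰.U i))
    -- (ii) uniformly `m`-close coverings
    (C' : ℝ) (hclose : ∀ i, ∀ x ∈ 𝒰.U i, ∀ y ∈ 𝒱.U i, mw w x y ≤ C') :
    ∀ p : ℝ≥0∞, 1 ≤ p →
      ∃ c C : ℝ≥0∞, 0 < c ∧ C < ⊤ ∧
        ∀ lam : I → ℝ, (∀ i, 0 ≤ lam i) →
          (c * MeasureTheory.eLpNorm
              (fun x => (∑' i, lam i * (𝒱.U i).indicator (fun _ => (1 : ℝ)) x) * w x) p μ ≤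
            MeasureTheory.eLpNorm
              (fun x => (∑' i, lam i * (𝒰.U i).indicator (fun _ => (1 : ℝ)) x) * w x) p μ ∧
            MeasureTheory.eLpNorm
              (fun x => (∑' i, lam i * (𝒰.U i).indicator (fun _ => (1 : ℝ)) x) * w x) p μ ≤
            C * MeasureTheory.eLpNorm
              (fun x => (∑' i, lam i * (𝒱.U i).indicator (fun _ => (1 : ℝ)) x) * w x) p μ) ∧
          (c * MeasureTheory.eLpNorm
              (fun x => (∑' i, lam i * (μ (𝒱.U i)).toReal⁻¹ *
                  (𝒱.U i).indicator (fun _ => (1 : ℝ)) x) * w x) p μ ≤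
            MeasureTheory.eLpNorm
              (fun x => (∑' i, lam i * (μ (𝒰.U i)).toReal⁻¹ *
                  (𝒰.U i).indicator (fun _ => (1 : ℝ)) x) * w x) p μ ∧
            MeasureTheory.eLpNorm
              (fun x => (∑' i, lam i * (μ (𝒰.U i)).toReal⁻¹ *
                  (𝒰.U i).indicator (fun _ => (1 : ℝ)) x) * w x) p μ ≤
            C * MeasureTheory.eLpNorm
              (fun x => (∑' i, lam i * (μ (𝒱.U i)).toReal⁻¹ *
                  (𝒱.U i).indicator (fun _ => (1 : ℝ)) x) * w x) p μ) := by
  intro p hp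
  have hUV : ∀ i, μ (𝒰.U i) ≤ Cl⁻¹ * μ (𝒱.U i) := fun i => by
    have hCl : Cl ≠ ∞ := (ENNReal.lt_top_of_mul_ne_top_left
      ((hcomp i).1.trans_lt (𝒱.finiteMeas i)).ne (𝒰.measure_pos i).ne').ne
    exact (ENNReal.mul_le_iff_le_inv hClpos.ne' hCl).1 (hcomp i).1
  have hClinv : Cl⁻¹ ≠ ∞ := ENNReal.inv_ne_top.2 hClpos.ne'
  obtain ⟨C, hC, hCUV⟩ := ModCover.exists_eLpNorm_weightedSum_le_of_measure_equiv hwpos hcoverU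
    hcoverV hclose hClinv hUV hCufin.ne (fun i => (hcomp i).2) hp
  obtain ⟨D, hD, hDVU⟩ := ModCover.exists_eLpNorm_weightedSum_le_of_measure_equiv hwpos hcoverV
    hcoverU (fun i y hy x hx => (mw_comm w y x).trans_le (hclose i x hx y hy)) hCufin.ne
    (fun i => (hcomp i).2) hClinv hUV hp
  refine ⟨D⁻¹, C, ENNReal.inv_pos.2 hD, hC.lt_top, fun lam hlam => ?_⟩
  simp only [← ENNReal.div_eq_inv_mul]
  exact ⟨⟨ENNReal.div_le_of_le_mul' (hDVU lam hlam).1, (hCUV lam hlam).1⟩,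
    ⟨ENNReal.div_le_of_le_mul' (hDVU lam hlam).2, (hCUV lam hlam).2⟩⟩

/-- `m`-equivalent moderate admissible coverings over the same index set
produce the same sequence spaces `Y^♭` and `Y^♮` (for `Y = L^p_w`) with equivalent norms. -/
theorem m_equivalent_coverings_same_sequence_spaces
    {X : Type*} [TopologicalSpace X] [T2Space X] [LocallyCompactSpace X]
    [SigmaCompactSpace X] [MeasurableSpace X] [BorelSpace X]
    (μ : MeasureTheory.Measure X) [μ.Regular] [μ.IsOpenPosMeasure]
    {I : Type*} [Countable I]
    (𝒰 𝒱 : ModCover X μ I)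
    (w : X → ℝ) (hw : Continuous w) (hwpos : ∀ x, 0 < w x)
    -- both coverings satisfy the `m_w`-cover condition
    (CmU : ℝ) (hcoverU : ∀ i, ∀ x ∈ 𝒰.U i, ∀ y ∈ 𝒰.U i, mw w x y ≤ CmU)
    (CmV : ℝ) (hcoverV : ∀ i, ∀ x ∈ 𝒱.U i, ∀ y ∈ 𝒱.U i, mw w x y ≤ CmV)
    -- (i) comparable measures
    (Cl Cu : ℝ≥0∞) (hClpos : 0 < Cl) (hCufin : Cu < ⊤)
    (hcomp : ∀ i, Cl * μ (𝒰.U i) ≤ μ (𝒱.U i) ∧ μ (𝒱.U i) ≤ Cu * μ (𝒰.U i))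
    -- (ii) uniformly `m`-close coverings
    (C' : ℝ) (hclose : ∀ i, ∀ x ∈ 𝒰.U i, ∀ y ∈ 𝒱.U i, mw w x y ≤ C') :
    ∀ p : ℝ≥0∞, 1 ≤ p →
      ∃ c C : ℝ≥0∞, 0 < c ∧ C < ⊤ ∧
        ∀ lam : I → ℝ, (∀ i, 0 ≤ lam i) →
          (c * MeasureTheory.eLpNorm
              (fun x => (∑' i, lam i * (𝒱.U i).indicator (fun _ => (1 : ℝ)) x) * w x) p μ ≤
            MeasureTheory.eLpNorm
              (fun x => (∑' i, lam i * (𝒰.U i).indicator (fun _ => (1 : ℝ)) x) * w x) p μ ∧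
            MeasureTheory.eLpNorm
              (fun x => (∑' i, lam i * (𝒰.U i).indicator (fun _ => (1 : ℝ)) x) * w x) p μ ≤
            C * MeasureTheory.eLpNorm
              (fun x => (∑' i, lam i * (𝒱.U i).indicator (fun _ => (1 : ℝ)) x) * w x) p μ) ∧
          (c * MeasureTheory.eLpNorm
              (fun x => (∑' i, lam i * (μ (𝒱.U i)).toReal⁻¹ *
                  (𝒱.U i).indicator (fun _ => (1 : ℝ)) x) * w x) p μ ≤
            MeasureTheory.eLpNorm
              (fun x => (∑' i, lam i * (μ (𝒰.U i)).toReal⁻¹ *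
                  (𝒰.U i).indicator (fun _ => (1 : ℝ)) x) * w x) p μ ∧
            MeasureTheory.eLpNorm
              (fun x => (∑' i, lam i * (μ (𝒰.U i)).toReal⁻¹ *
                  (𝒰.U i).indicator (fun _ => (1 : ℝ)) x) * w x) p μ ≤
            C * MeasureTheory.eLpNorm
              (fun x => (∑' i, lam i * (μ (𝒱.U i)).toReal⁻¹ *
                  (𝒱.U i).indicator (fun _ => (1 : ℝ)) x) * w x) p μ) :=
  m_equivalent_coverings_same_sequence_spaces_general μ 𝒰 𝒱 w hwpos CmU hcoverU CmV hcoverV Cl Cu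
    hClpos hCufin hcomp C' hclose
end
end
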